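/- Let 0 ≤ β ≤ α < 1 with α > 0. Then c_α · ∫_0^1 (1−(1−s)^α)·β s^{−β−1} ds + c_α = c_α · ∫_0^1 (1−s)^{−β} α s^{α−1} ds = 1/((1−β)·B(1−α, 1+α−β)), where c_α = 1/(Γ(1−α)Γ(1+α)) and B is the Beta function. (For β = 0 the first integral is interpreted as 0.) -/

import Mathlib

/-! Both integrals are Beta integrals in disguise. The second one is `α B(α, 1 - β)` after
expanding. For the first one, `I₁`, the function `G(s) = (1 - (1 - s)^α) s^(-β)` has derivative
`α s^(-β) (1 - s)^(α - 1) - (1 - (1 - s)^α) β s^(-β - 1)`, tends to `0` at `0⁺` because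
`0 ≤ 1 - (1 - s)^α ≤ s`, and to `1` at `1⁻`; the fundamental theorem of calculus on `(0, 1)` thus
gives `I₁ + 1 = α B(1 - β, α)`. The closed form follows from `Γ(1 + α) = α Γ(α)` and
`Γ(2 - β) = (1 - β) Γ(1 - β)`. -/

open MeasureTheory Real Set Filter Topology

section Beta

lemma ofReal_rpow_mul_one_sub_rpow {x : ℝ} (hx : x ∈ Icc (0 : ℝ) 1) (a b : ℝ) :
    ((x ^ (a - 1) * (1 - x) ^ (b - 1) : ℝ) : ℂ)
      = (x : ℂ) ^ ((a : ℂ) - 1) * (1 - (x : ℂ)) ^ ((b : ℂ) - 1) := by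
  have h1x : 0 ≤ 1 - x := sub_nonneg.2 hx.2
  push_cast [Complex.ofReal_cpow hx.1, Complex.ofReal_cpow h1x]
  rfl

variable {a b : ℝ}

lemma integrableOn_rpow_mul_one_sub_rpow (ha : 0 < a) (hb : 0 < b) :
    IntegrableOn (fun x : ℝ => x ^ (a - 1) * (1 - x) ^ (b - 1)) (Ioo 0 1) := by
  have h := Complex.betaIntegral_convergent (u := a) (v := b) (by simpa) (by simpa)
  rw [intervalIntegrable_iff_integrableOn_Ioo_of_le zero_le_one] at h
  refine (integrableOn_congr_fun (fun x hx => ?_) measurableSet_Ioo).1 h.re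
  simp [← ofReal_rpow_mul_one_sub_rpow (Ioo_subset_Icc_self hx)]

lemma setIntegral_rpow_mul_one_sub_rpow (ha : 0 < a) (hb : 0 < b) :
    ∫ x in Ioo 0 1, x ^ (a - 1) * (1 - x) ^ (b - 1) = ProbabilityTheory.beta a b := by
  rw [ProbabilityTheory.beta_eq_betaIntegralReal a b ha hb, Complex.betaIntegral,
    ← intervalIntegral.integral_congr (fun x hx => ofReal_rpow_mul_one_sub_rpow
      (uIcc_of_le (zero_le_one' ℝ) ▸ hx) a b),
    intervalIntegral.integral_ofReal, Complex.ofReal_re,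
    intervalIntegral.integral_of_le zero_le_one, integral_Ioc_eq_integral_Ioo]

lemma ProbabilityTheory.beta_comm (a b : ℝ) :
    ProbabilityTheory.beta a b = ProbabilityTheory.beta b a := by
  simp only [ProbabilityTheory.beta, mul_comm, add_comm]

end Beta

section MomentIntegrals

variable {α β : ℝ}

lemma abs_one_sub_one_sub_rpow_le (hα0 : 0 ≤ α) (hα1 : α ≤ 1) {s : ℝ} (hs : s ∈ Icc (0 : ℝ) 1) :
    |1 - (1 - s) ^ α| ≤ s := by
  have h0 : 0 ≤ 1 - s := sub_nonneg.2 hs.2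
  have h1 : 1 - s ≤ 1 := by linarith [hs.1]
  rw [abs_of_nonneg (sub_nonneg.2 (rpow_le_one h0 h1 hα0))]
  linarith [self_le_rpow_of_le_one h0 h1 hα1]

lemma integrableOn_one_sub_one_sub_rpow_mul_rpow (hα0 : 0 ≤ α) (hα1 : α ≤ 1) (hβ : β < 1) :
    IntegrableOn (fun s : ℝ => (1 - (1 - s) ^ α) * s ^ (-β - 1)) (Ioo 0 1) := by
  have hdom : IntegrableOn (fun s : ℝ => s ^ (-β)) (Ioo 0 1) :=
    (intervalIntegrable_iff_integrableOn_Ioo_of_le zero_le_one).1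
      (intervalIntegral.intervalIntegrable_rpow' (by linarith))
  refine hdom.mono' (by fun_prop) ?_
  filter_upwards [ae_restrict_mem measurableSet_Ioo] with s hs
  calc ‖(1 - (1 - s) ^ α) * s ^ (-β - 1)‖ = |1 - (1 - s) ^ α| * s ^ (-β - 1) := by
        rw [norm_mul, norm_of_nonneg (rpow_nonneg hs.1.le _), norm_eq_abs]
    _ ≤ s * s ^ (-β - 1) :=
        mul_le_mul_of_nonneg_right (abs_one_sub_one_sub_rpow_le hα0 hα1 (Ioo_subset_Icc_self hs))
          (rpow_nonneg hs.1.le _)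
    _ = s ^ (-β) := by rw [rpow_sub_one hs.1.ne', mul_div_cancel₀ _ hs.1.ne']

lemma tendsto_one_sub_one_sub_rpow_mul_rpow_nhdsGT_zero (hα0 : 0 ≤ α) (hα1 : α ≤ 1)
    (hβ : β < 1) : Tendsto (fun s : ℝ => (1 - (1 - s) ^ α) * s ^ (-β)) (𝓝[>] 0) (𝓝 0) := by
  have hlim : Tendsto (fun s : ℝ => s ^ (1 - β)) (𝓝[>] 0) (𝓝 0) := by
    simpa [zero_rpow (sub_pos.2 hβ).ne'] using
      (continuousAt_rpow_const 0 (1 - β) (Or.inr (sub_pos.2 hβ).le)).tendsto.mono_left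
        nhdsWithin_le_nhds
  refine squeeze_zero_norm' ?_ hlim
  filter_upwards [Ioo_mem_nhdsGT zero_lt_one] with s hs
  calc ‖(1 - (1 - s) ^ α) * s ^ (-β)‖ = |1 - (1 - s) ^ α| * s ^ (-β) := by
        rw [norm_mul, norm_of_nonneg (rpow_nonneg hs.1.le _), norm_eq_abs]
    _ ≤ s * s ^ (-β) :=
        mul_le_mul_of_nonneg_right (abs_one_sub_one_sub_rpow_le hα0 hα1 (Ioo_subset_Icc_self hs))
          (rpow_nonneg hs.1.le _)
    _ = s ^ (1 - β) := by rw [sub_eq_add_neg, rpow_add hs.1, rpow_one]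

lemma tendsto_one_sub_one_sub_rpow_mul_rpow_nhdsLT_one (hα : 0 < α) :
    Tendsto (fun s : ℝ => (1 - (1 - s) ^ α) * s ^ (-β)) (𝓝[<] 1) (𝓝 1) := by
  have hcont : ContinuousAt (fun s : ℝ => (1 - (1 - s) ^ α) * s ^ (-β)) 1 := by
    fun_prop (disch := first | exact Or.inr hα.le | exact Or.inl one_ne_zero)
  simpa [zero_rpow hα.ne'] using hcont.tendsto.mono_left nhdsWithin_le_nhds

lemma hasDerivAt_one_sub_one_sub_rpow_mul_rpow {s : ℝ} (hs : s ∈ Ioo (0 : ℝ) 1) :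
    HasDerivAt (fun s : ℝ => (1 - (1 - s) ^ α) * s ^ (-β))
      (α * (s ^ (-β) * (1 - s) ^ (α - 1)) - (1 - (1 - s) ^ α) * (β * s ^ (-β - 1))) s := by
  have h1s : HasDerivAt (fun s : ℝ => (1 - s) ^ α) (-1 * α * (1 - s) ^ (α - 1)) s :=
    ((hasDerivAt_id s).const_sub 1).rpow_const (Or.inl (sub_pos.2 hs.2).ne')
  have hs' : HasDerivAt (fun s : ℝ => s ^ (-β)) (-β * s ^ (-β - 1)) s :=
    hasDerivAt_rpow_const (Or.inl hs.1.ne')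
  exact (h1s.const_sub 1 |>.mul hs').congr_deriv (by ring)

lemma setIntegral_one_sub_one_sub_rpow_mul_rpow (hα0 : 0 < α) (hα1 : α ≤ 1) (hβ : β < 1) :
    (∫ s in Ioo 0 1, (1 - (1 - s) ^ α) * (β * s ^ (-β - 1))) + 1
      = α * ProbabilityTheory.beta α (1 - β) := by
  have hbeta : IntegrableOn (fun s : ℝ => s ^ (-β) * (1 - s) ^ (α - 1)) (Ioo 0 1) := by
    simpa only [sub_sub_cancel_left] using integrableOn_rpow_mul_one_sub_rpow (sub_pos.2 hβ) hα0
  have hf : IntegrableOn (fun s : ℝ => (1 - (1 - s) ^ α) * (β * s ^ (-β - 1))) (Ioo 0 1) :=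
    IntegrableOn.congr_fun ((integrableOn_one_sub_one_sub_rpow_mul_rpow hα0.le hα1 hβ).const_mul β)
      (fun _ _ => mul_left_comm _ _ _) measurableSet_Ioo
  have hB : ∫ s in Ioo 0 1, s ^ (-β) * (1 - s) ^ (α - 1) = ProbabilityTheory.beta (1 - β) α := by
    simpa only [sub_sub_cancel_left] using setIntegral_rpow_mul_one_sub_rpow (sub_pos.2 hβ) hα0
  have hFTC : ∫ s in (0 : ℝ)..1,
      α * (s ^ (-β) * (1 - s) ^ (α - 1)) - (1 - (1 - s) ^ α) * (β * s ^ (-β - 1)) = 1 - 0 :=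
    intervalIntegral.integral_eq_sub_of_hasDerivAt_of_tendsto zero_lt_one
      (fun s hs => hasDerivAt_one_sub_one_sub_rpow_mul_rpow hs)
      ((intervalIntegrable_iff_integrableOn_Ioo_of_le zero_le_one).2 ((hbeta.const_mul α).sub hf))
      (tendsto_one_sub_one_sub_rpow_mul_rpow_nhdsGT_zero hα0.le hα1 hβ)
      (tendsto_one_sub_one_sub_rpow_mul_rpow_nhdsLT_one hα0)
  rw [intervalIntegral.integral_of_le zero_le_one, integral_Ioc_eq_integral_Ioo,
    integral_sub (hbeta.const_mul α) hf, integral_const_mul, hB] at hFTC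
  rw [ProbabilityTheory.beta_comm]
  linarith

end MomentIntegrals

theorem first_moment_Z_alpha_beta_general
    (α β : ℝ) (hα0 : 0 < α) (hα1 : α < 1) (hβα : β ≤ α)
    (cα : ℝ) (hcα : cα = 1 / (Real.Gamma (1 - α) * Real.Gamma (1 + α)))
    (B : ℝ → ℝ → ℝ)
    (hB : ∀ a b, B a b = Real.Gamma a * Real.Gamma b / Real.Gamma (a + b)) :
    cα * (∫ s in Set.Ioo (0:ℝ) 1, (1 - (1 - s) ^ α) * (β * s ^ (-β - 1))) + cα
        = cα * ∫ s in Set.Ioo (0:ℝ) 1, (1 - s) ^ (-β) * (α * s ^ (α - 1)) ∧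
      cα * (∫ s in Set.Ioo (0:ℝ) 1, (1 - s) ^ (-β) * (α * s ^ (α - 1)))
        = 1 / ((1 - β) * B (1 - α) (1 + α - β)) := by
  have hβ1 : β < 1 := hβα.trans_lt hα1
  have h1β : 0 < 1 - β := sub_pos.2 hβ1
  have hI1 := setIntegral_one_sub_one_sub_rpow_mul_rpow hα0 hα1.le hβ1
  have hI2 : ∫ s in Ioo 0 1, (1 - s) ^ (-β) * (α * s ^ (α - 1))
      = α * ProbabilityTheory.beta α (1 - β) := by
    rw [← setIntegral_rpow_mul_one_sub_rpow hα0 h1β, ← integral_const_mul]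
    refine setIntegral_congr_fun measurableSet_Ioo fun s _ => ?_
    rw [sub_sub_cancel_left]
    ring
  refine ⟨by rw [hI2, ← hI1]; ring, ?_⟩
  have hΓα : Gamma (1 + α) = α * Gamma α := by rw [add_comm, Gamma_add_one hα0.ne']
  have hΓβ : Gamma (1 - α + (1 + α - β)) = (1 - β) * Gamma (1 - β) := by
    rw [show 1 - α + (1 + α - β) = 1 - β + 1 by ring, Gamma_add_one h1β.ne']
  have hΓ1α := (Gamma_pos_of_pos (sub_pos.2 hα1)).ne'
  have hΓα0 := (Gamma_pos_of_pos hα0).ne'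
  have hΓ1β := (Gamma_pos_of_pos h1β).ne'
  rw [hI2, hcα, hB, ProbabilityTheory.beta, hΓα, hΓβ, show α + (1 - β) = 1 + α - β by ring]
  field_simp

/-- **First moment of `Z_{α,β}`.**
For `0 ≤ β ≤ α < 1` with `α > 0`, with `c_α = 1/(Γ(1−α)Γ(1+α))` and
`B(a,b) = Γ(a)Γ(b)/Γ(a+b)`,
`c_α ∫_0^1 (1−(1−s)^α) β s^{−β−1} ds + c_α = c_α ∫_0^1 (1−s)^{−β} α s^{α−1} ds
  = 1/((1−β)·B(1−α, 1+α−β))`. -/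
theorem first_moment_Z_alpha_beta
    (α β : ℝ) (hα0 : 0 < α) (hα1 : α < 1) (hβ0 : 0 ≤ β) (hβα : β ≤ α)
    (cα : ℝ) (hcα : cα = 1 / (Real.Gamma (1 - α) * Real.Gamma (1 + α)))
    (B : ℝ → ℝ → ℝ)
    (hB : ∀ a b, B a b = Real.Gamma a * Real.Gamma b / Real.Gamma (a + b)) :
    cα * (∫ s in Set.Ioo (0:ℝ) 1, (1 - (1 - s) ^ α) * (β * s ^ (-β - 1))) + cα
        = cα * ∫ s in Set.Ioo (0:ℝ) 1, (1 - s) ^ (-β) * (α * s ^ (α - 1)) ∧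
      cα * (∫ s in Set.Ioo (0:ℝ) 1, (1 - s) ^ (-β) * (α * s ^ (α - 1)))
        = 1 / ((1 - β) * B (1 - α) (1 + α - β)) :=
  first_moment_Z_alpha_beta_general α β hα0 hα1 hβα cα hcα B hB
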